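/- Suppose y_upper = B y_lower + (μ-δ)c and y_lower = A y_upper + (μ+δ)c with I-BA, I-AB invertible. Then y_upper = μ X_upper - δ s_upper and y_lower = μ X_lower + δ s_lower, where X_upper = (I-BA)^{-1}(I+B)c, s_upper = (I-BA)^{-1}(I-B)c, X_lower = (I-AB)^{-1}(I+A)c, s_lower = (I-AB)^{-1}(I-A)c. Consequently, if X_upper^{(1)} < 0, the condition y_upper^{(1)} ≥ 0 requires μ X_upper^{(1)} ≥ δ s_upper^{(1)}, i.e., μ ≤ δ s_upper^{(1)}/X_upper^{(1)}. -/
import Mathlib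

lemma aux_inv {m : ℕ} (M : Matrix (Fin m) (Fin m) ℝ) (hM : IsUnit M)
    (v w : Fin m → ℝ) (h : M.mulVec v = w) : v = M⁻¹.mulVec w := by
  have hd : IsUnit M.det := (Matrix.isUnit_iff_isUnit_det M).mp hM
  rw [← h, Matrix.mulVec_mulVec, Matrix.nonsing_inv_mul M hd, Matrix.one_mulVec]

/-- The out-of-phase bilateral period-two solution: if
`y_upper = B y_lower + (μ-δ)c` and `y_lower = A y_upper + (μ+δ)c`, with `I - BA`
and `I - AB` invertible, then `y_upper = μ X_upper - δ s_upper` and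
`y_lower = μ X_lower + δ s_lower`; consequently, if `X_upper⁽¹⁾ < 0` then
`y_upper⁽¹⁾ ≥ 0` forces `μ X_upper⁽¹⁾ ≥ δ s_upper⁽¹⁾`, i.e.
`μ ≤ δ s_upper⁽¹⁾ / X_upper⁽¹⁾`. -/
theorem stmt18 (m : ℕ) [NeZero m] (A B : Matrix (Fin m) (Fin m) ℝ) (c : Fin m → ℝ)
    (μ δ : ℝ) (yu yl Xu Xl su sl : Fin m → ℝ)
    (hBA : IsUnit (1 - B * A)) (hAB : IsUnit (1 - A * B))
    (hXu : Xu = (1 - B * A)⁻¹.mulVec ((1 + B).mulVec c))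
    (hsu : su = (1 - B * A)⁻¹.mulVec ((1 - B).mulVec c))
    (hXl : Xl = (1 - A * B)⁻¹.mulVec ((1 + A).mulVec c))
    (hsl : sl = (1 - A * B)⁻¹.mulVec ((1 - A).mulVec c))
    (hu : yu = B.mulVec yl + (μ - δ) • c)
    (hl : yl = A.mulVec yu + (μ + δ) • c) :
    yu = μ • Xu - δ • su ∧
    yl = μ • Xl + δ • sl ∧
    (Xu 0 < 0 → 0 ≤ yu 0 → (δ * su 0 ≤ μ * Xu 0 ∧ μ ≤ δ * su 0 / Xu 0)) := by
  have hu2 : (1 - B * A).mulVec yu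
      = μ • ((1 + B).mulVec c) - δ • ((1 - B).mulVec c) := by
    rw [hl] at hu
    simp only [Matrix.sub_mulVec, Matrix.add_mulVec, Matrix.one_mulVec,
      Matrix.mulVec_add, Matrix.mulVec_smul, ← Matrix.mulVec_mulVec] at *
    nth_rewrite 1 [hu]
    module
  have hl2 : (1 - A * B).mulVec yl
      = μ • ((1 + A).mulVec c) + δ • ((1 - A).mulVec c) := by
    rw [hu] at hl
    simp only [Matrix.sub_mulVec, Matrix.add_mulVec, Matrix.one_mulVec,
      Matrix.mulVec_add, Matrix.mulVec_smul, ← Matrix.mulVec_mulVec] at *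
    nth_rewrite 1 [hl]
    module
  have h1 : yu = μ • Xu - δ • su := by
    rw [aux_inv _ hBA _ _ hu2, hXu, hsu, Matrix.mulVec_sub, Matrix.mulVec_smul,
      Matrix.mulVec_smul]
  have h2 : yl = μ • Xl + δ • sl := by
    rw [aux_inv _ hAB _ _ hl2, hXl, hsl, Matrix.mulVec_add, Matrix.mulVec_smul,
      Matrix.mulVec_smul]
  refine ⟨h1, h2, fun hneg hpos => ?_⟩
  have hy : yu 0 = μ * Xu 0 - δ * su 0 := by rw [h1]; simp
  have hle : δ * su 0 ≤ μ * Xu 0 := by linarith [hy ▸ hpos]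
  exact ⟨hle, by rw [le_div_iff_of_neg hneg]; linarith⟩
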